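/- Let ψ be a unit vector in H₁⊗…⊗Hₙ (each Hᵢ ≅ ℂ^d) and define Λ(ψ) = max over unit product vectors a₁⊗…⊗aₙ of |⟨a₁⊗…⊗aₙ|ψ⟩|. Let F_k = (Π_k)^{⊗n} applied to ψ^{⊗k} (with Π_k acting on the k copies of each local Hilbert space). Then Λ(ψ)² ≤ ‖F_k‖^{2/k}. -/

import Mathlib

open scoped InnerProductSpace BigOperators

noncomputable section

variable {n d : ℕ}

/-- The elementary product tensor `a₁ ⊗ ⋯ ⊗ aₙ` in `(ℂ^d)^{⊗n}`. -/
def prodTensor (a : Fin n → EuclideanSpace ℂ (Fin d)) :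
    EuclideanSpace ℂ (Fin n → Fin d) :=
  WithLp.toLp 2 (fun x => ∏ i : Fin n, a i (x i))

/-- The set of overlaps `|⟨a₁ ⊗ ⋯ ⊗ aₙ|ψ⟩|` of `ψ` with unit product vectors. -/
def overlapSet (ψ : EuclideanSpace ℂ (Fin n → Fin d)) : Set ℝ :=
  {r | ∃ a : Fin n → EuclideanSpace ℂ (Fin d),
        (∀ i, ‖a i‖ = 1) ∧ r = ‖⟪prodTensor a, ψ⟫_ℂ‖}

/-- `Λ(ψ)`: the maximal overlap of `ψ` with unit product vectors
(the injective tensor norm). -/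
def Lambda (ψ : EuclideanSpace ℂ (Fin n → Fin d)) : ℝ :=
  sSup (overlapSet ψ)

/-- `ψ^{⊗k}`, viewed as a vector in `⊗ᵢ (Hᵢ)^{⊗k}` with the `k` copies of each
party's space grouped together. -/
def psiPow (ψ : EuclideanSpace ℂ (Fin n → Fin d)) (k : ℕ) :
    EuclideanSpace ℂ (Fin n → Fin k → Fin d) :=
  WithLp.toLp 2 (fun x => ∏ j : Fin k, ψ (fun i => x i j))

/-- `F_k = Π_k^{⊗n} ψ^{⊗k}`: the result of applying the symmetric projector
`Π_k = (1/k!) ∑_π V_π` on the `k` copies of each of the `n` local spaces. -/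
def Fvec (ψ : EuclideanSpace ℂ (Fin n → Fin d)) (k : ℕ) :
    EuclideanSpace ℂ (Fin n → Fin k → Fin d) :=
  ((k.factorial : ℂ) ^ n)⁻¹ •
    ∑ σ : Fin n → Equiv.Perm (Fin k),
      (WithLp.toLp 2 (fun x => psiPow ψ k (fun i j => x i (σ i j))) :
        EuclideanSpace ℂ (Fin n → Fin k → Fin d))

/-! ### Auxiliary material -/

lemma sum_prod_eq_aux {m : ℕ} {α : Type*} [Fintype α] (f : Fin m → α → ℂ) :
    ∑ x : Fin m → α, ∏ j, f j (x j) = ∏ j, ∑ t, f j t := by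
  rw [Finset.prod_univ_sum, Fintype.piFinset_univ]

/-- The product tensor `(a₁ ⊗ ⋯ ⊗ aₙ)^{⊗k}`, with copies grouped per party. -/
def bigProd (a : Fin n → EuclideanSpace ℂ (Fin d)) (k : ℕ) :
    EuclideanSpace ℂ (Fin n → Fin k → Fin d) :=
  WithLp.toLp 2 (fun x => ∏ i : Fin n, ∏ j : Fin k, a i (x i j))

def swapEquivAux (n d k : ℕ) : (Fin k → Fin n → Fin d) ≃ (Fin n → Fin k → Fin d) :=
  ⟨Function.swap, Function.swap, fun _ => rfl, fun _ => rfl⟩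

lemma norm_bigProd (a : Fin n → EuclideanSpace ℂ (Fin d)) (ha : ∀ i, ‖a i‖ = 1) (k : ℕ) :
    ‖bigProd a k‖ = 1 := by
  have h : ⟪bigProd a k, bigProd a k⟫_ℂ = 1 := by
    rw [PiLp.inner_apply]
    simp only [RCLike.inner_apply', bigProd]
    have : ∀ x : Fin n → Fin k → Fin d,
        (starRingEnd ℂ) (∏ i, ∏ j, a i (x i j)) * (∏ i, ∏ j, a i (x i j)) =
        ∏ i, (∏ j, (starRingEnd ℂ) (a i (x i j)) * a i (x i j)) := by
      intro x
      rw [map_prod, ← Finset.prod_mul_distrib]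
      congr 1; ext i
      rw [map_prod, ← Finset.prod_mul_distrib]
    simp_rw [this]
    rw [sum_prod_eq_aux (fun i (y : Fin k → Fin d) => ∏ j, (starRingEnd ℂ) (a i (y j)) * a i (y j))]
    have h2 : ∀ i : Fin n, ∑ y : Fin k → Fin d, ∏ j, (starRingEnd ℂ) (a i (y j)) * a i (y j) = 1 := by
      intro i
      rw [sum_prod_eq_aux (fun _ t => (starRingEnd ℂ) (a i t) * a i t)]
      have : ∑ t, (starRingEnd ℂ) (a i t) * a i t = 1 := by
        have := @inner_self_eq_norm_sq_to_K ℂ _ _ _ _ (a i)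
        rw [PiLp.inner_apply] at this
        simp only [RCLike.inner_apply'] at this
        rw [this, ha i]; norm_num
      simp [this]
    simp [h2]
  have h3 : ‖bigProd a k‖ ^ 2 = 1 := by
    rw [← inner_self_eq_norm_sq (𝕜 := ℂ), h]
    simp
  nlinarith [norm_nonneg (bigProd a k)]

lemma inner_bigProd_psiPow (a : Fin n → EuclideanSpace ℂ (Fin d))
    (ψ : EuclideanSpace ℂ (Fin n → Fin d)) (k : ℕ) :
    ⟪bigProd a k, psiPow ψ k⟫_ℂ = ⟪prodTensor a, ψ⟫_ℂ ^ k := by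
  rw [PiLp.inner_apply]
  simp only [RCLike.inner_apply', bigProd, psiPow]
  have hterm : ∀ x : Fin n → Fin k → Fin d,
      (starRingEnd ℂ) (∏ i, ∏ j, a i (x i j)) * ∏ j, ψ (fun i => x i j)
      = ∏ j, ((∏ i, (starRingEnd ℂ) (a i (x i j))) * ψ (fun i => x i j)) := by
    intro x
    rw [map_prod]
    simp_rw [map_prod]
    rw [Finset.prod_comm, ← Finset.prod_mul_distrib]
  simp_rw [hterm]
  rw [← Equiv.sum_comp (swapEquivAux n d k)
    (fun x => ∏ j, ((∏ i, (starRingEnd ℂ) (a i (x i j))) * ψ (fun i => x i j)))]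
  have : ∀ y : Fin k → Fin n → Fin d,
      (∏ j, ((∏ i, (starRingEnd ℂ) (a i (swapEquivAux n d k y i j))) *
        ψ (fun i => swapEquivAux n d k y i j)))
      = ∏ j, ((∏ i, (starRingEnd ℂ) (a i (y j i))) * ψ (y j)) := fun y => rfl
  simp_rw [this]
  rw [sum_prod_eq_aux (fun j (z : Fin n → Fin d) => (∏ i, (starRingEnd ℂ) (a i (z i))) * ψ z)]
  rw [Finset.prod_const]
  rw [PiLp.inner_apply]
  simp only [RCLike.inner_apply', prodTensor, map_prod, Finset.card_univ, Fintype.card_fin]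

lemma inner_bigProd_perm (a : Fin n → EuclideanSpace ℂ (Fin d))
    (ψ : EuclideanSpace ℂ (Fin n → Fin d)) (k : ℕ) (σ : Fin n → Equiv.Perm (Fin k)) :
    ⟪bigProd a k, (WithLp.toLp 2 (fun x => psiPow ψ k (fun i j => x i (σ i j))) :
        EuclideanSpace ℂ (Fin n → Fin k → Fin d))⟫_ℂ
      = ⟪bigProd a k, psiPow ψ k⟫_ℂ := by
  rw [PiLp.inner_apply, PiLp.inner_apply]
  simp only [RCLike.inner_apply']
  set e : (Fin n → Fin k → Fin d) ≃ (Fin n → Fin k → Fin d) :=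
    Equiv.piCongrRight (fun i => Equiv.arrowCongr (σ i).symm (Equiv.refl (Fin d))) with he
  have hA : ∀ x, bigProd a k (e x) = bigProd a k x := by
    intro x
    simp only [bigProd, he, Equiv.piCongrRight, Equiv.arrowCongr]
    congr 1
    ext i
    exact Equiv.prod_comp (σ i) (fun j => a i (x i j))
  have hx : ∀ x : Fin n → Fin k → Fin d,
      psiPow ψ k (fun i j => x i (σ i j)) = psiPow ψ k (e x) := fun x => rfl
  simp_rw [hx]
  calc ∑ x, (starRingEnd ℂ) (bigProd a k x) * psiPow ψ k (e x)
      = ∑ x, (starRingEnd ℂ) (bigProd a k (e x)) * psiPow ψ k (e x) := by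
        simp_rw [hA]
    _ = ∑ x, (starRingEnd ℂ) (bigProd a k x) * psiPow ψ k x :=
        Equiv.sum_comp e (fun x => (starRingEnd ℂ) (bigProd a k x) * psiPow ψ k x)

lemma inner_bigProd_Fvec (a : Fin n → EuclideanSpace ℂ (Fin d))
    (ψ : EuclideanSpace ℂ (Fin n → Fin d)) (k : ℕ) :
    ⟪bigProd a k, Fvec ψ k⟫_ℂ = ⟪prodTensor a, ψ⟫_ℂ ^ k := by
  rw [Fvec, inner_smul_right, inner_sum]
  simp_rw [inner_bigProd_perm, inner_bigProd_psiPow]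
  rw [Finset.sum_const, Finset.card_univ, Fintype.card_fun, Fintype.card_perm,
    Fintype.card_fin, nsmul_eq_mul, ← mul_assoc]
  rw [Fintype.card_fin, Nat.cast_pow, inv_mul_cancel₀, one_mul]
  exact pow_ne_zero _ (by exact_mod_cast k.factorial_ne_zero)

/-- Upper bound from the first hierarchy: `Λ(ψ)² ≤ ‖F_k‖^{2/k}`. -/
theorem lambda_sq_le_norm_Fk_rpow (ψ : EuclideanSpace ℂ (Fin n → Fin d))
    (hψ : ‖ψ‖ = 1) (k : ℕ) (hk : 0 < k) :
    Lambda ψ ^ 2 ≤ ‖Fvec ψ k‖ ^ ((2 : ℝ) / k) := by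
  have hF0 : (0:ℝ) ≤ ‖Fvec ψ k‖ := norm_nonneg _
  have hk' : (k:ℝ) ≠ 0 := Nat.cast_ne_zero.mpr hk.ne'
  have key : ∀ r ∈ overlapSet ψ, r ≤ ‖Fvec ψ k‖ ^ ((1:ℝ)/k) := by
    rintro r ⟨a, ha, rfl⟩
    have hbound : ‖⟪prodTensor a, ψ⟫_ℂ‖ ^ k ≤ ‖Fvec ψ k‖ := by
      calc ‖⟪prodTensor a, ψ⟫_ℂ‖ ^ k = ‖⟪prodTensor a, ψ⟫_ℂ ^ k‖ := (norm_pow _ _).symm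
        _ = ‖⟪bigProd a k, Fvec ψ k⟫_ℂ‖ := by rw [inner_bigProd_Fvec]
        _ ≤ ‖bigProd a k‖ * ‖Fvec ψ k‖ := norm_inner_le_norm _ _
        _ = ‖Fvec ψ k‖ := by rw [norm_bigProd a ha k, one_mul]
    have hr0 : (0:ℝ) ≤ ‖⟪prodTensor a, ψ⟫_ℂ‖ := norm_nonneg _
    calc ‖⟪prodTensor a, ψ⟫_ℂ‖
        = (‖⟪prodTensor a, ψ⟫_ℂ‖ ^ k) ^ ((1:ℝ)/k) := by
          rw [← Real.rpow_natCast ‖⟪prodTensor a, ψ⟫_ℂ‖ k, ← Real.rpow_mul hr0,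
            mul_one_div, div_self hk', Real.rpow_one]
      _ ≤ ‖Fvec ψ k‖ ^ ((1:ℝ)/k) :=
          Real.rpow_le_rpow (pow_nonneg hr0 k) hbound (by positivity)
  have hΛ : Lambda ψ ≤ ‖Fvec ψ k‖ ^ ((1:ℝ)/k) :=
    Real.sSup_le key (Real.rpow_nonneg hF0 _)
  have hΛ0 : 0 ≤ Lambda ψ :=
    Real.sSup_nonneg (by rintro r ⟨a, ha, rfl⟩; exact norm_nonneg _)
  calc Lambda ψ ^ 2 ≤ (‖Fvec ψ k‖ ^ ((1:ℝ)/k)) ^ 2 := pow_le_pow_left₀ hΛ0 hΛ 2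
    _ = ‖Fvec ψ k‖ ^ ((2:ℝ)/k) := by
        rw [← Real.rpow_natCast (‖Fvec ψ k‖ ^ ((1:ℝ)/k)) 2, ← Real.rpow_mul hF0]
        norm_num
        rw [show ((k:ℝ))⁻¹*2 = 2/k by ring]
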